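/- Let p be a prime, H₀ a finite cyclic group, and χ, ψ : H₀ → F_p^× two characters with ord(ψ) < ord(χ) (order meaning the cardinality of the image). Let i ≥ 1 and let H_i := H₀ ⋉ F_p^i be the semidirect product with multiplication (a,v)·(b,w) = (ab, v + χ(a)w), and let λ_i : H₀ → H_i, a ↦ (a,0). Then the normal subgroup of H_i generated by λ_i(ker ψ) equals π_i⁻¹(ker ψ) = ker(ψ) ⋉ F_p^i, where π_i : H_i → H₀ is the projection. -/

import Mathlib

/-! If every `a ∈ ker ψ` had `χ a = 1`, then `ker ψ ≤ ker χ`, so `|im χ| = [H₀ : ker χ]` would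
divide `|im ψ| = [H₀ : ker ψ]`. Hence some `a ∈ ker ψ` has `χ a ≠ 1`. The commutator of the
translation by `w` with `λ(a)` is the translation by `(1 - χ a) • w`, and `1 - χ a` is invertible
in `F_p`, so the normal closure contains all of `F_p^i`; with `λ(ker ψ)` it is `ker ψ ⋉ F_p^i`. -/

noncomputable section

/-- The homomorphism `AddAut A →* MulAut (Multiplicative A)`. -/
def addAutToMulAutMultiplicative (A : Type*) [AddGroup A] :
    Multiplicative (AddAut A) →* MulAut (Multiplicative A) where
  toFun e := AddEquiv.toMultiplicative (Multiplicative.toAdd e)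
  map_one' := rfl
  map_mul' _ _ := rfl

/-- The diagonal action of `H₀` on `(ℤ/pℤ)^i` in which `a ∈ H₀` acts on each component by
multiplication with `χ(a)`, for a character `χ : H₀ → F_p^×`. -/
def chiAction (p i : ℕ) (H₀ : Type*) [Group H₀] (χ : H₀ →* (ZMod p)ˣ) :
    H₀ →* MulAut (Multiplicative (Fin i → ZMod p)) :=
  (addAutToMulAutMultiplicative (Fin i → ZMod p)).comp
    ((DistribMulAction.toAddAut ((ZMod p)ˣ) (Fin i → ZMod p)).comp χ)

open scoped commutatorElement

theorem MonoidHom.exists_mem_ker_apply_ne_one_of_card_range_lt {G M : Type*} [Group G]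
    [Group M] (f g : G →* M) [Finite f.range] (h : Nat.card f.range < Nat.card g.range) :
    ∃ a ∈ f.ker, g a ≠ 1 := by
  by_contra! hker
  have hdvd : Nat.card g.range ∣ Nat.card f.range := by
    rw [← Subgroup.index_ker, ← Subgroup.index_ker]
    exact Subgroup.index_dvd_of_le hker
  exact h.not_ge (Nat.le_of_dvd Nat.card_pos hdvd)

namespace SemidirectProduct

variable {N G : Type*} [Group N] [Group G] {φ : G →* MulAut N}

theorem commutatorElement_inl_inr (n : N) (g : G) :
    ⁅(inl n : N ⋊[φ] G), (inr g : N ⋊[φ] G)⁆ = inl (n * φ g n⁻¹) := by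
  rw [commutatorElement_def, map_mul, inl_aut, map_inv, map_inv]
  group

theorem normalClosure_image_inr_le_comap_rightHom (K : Subgroup G) [K.Normal] :
    Subgroup.normalClosure (inr '' (K : Set G)) ≤ K.comap (rightHom : N ⋊[φ] G →* G) :=
  Subgroup.normalClosure_le_normal <| by
    rintro _ ⟨g, hg, rfl⟩
    simpa using hg

theorem comap_rightHom_le_of_inl_mem_of_inr_mem (K : Subgroup G) (S : Subgroup (N ⋊[φ] G))
    (hinl : ∀ n, inl n ∈ S) (hinr : ∀ g ∈ K, inr g ∈ S) :
    K.comap (rightHom : N ⋊[φ] G →* G) ≤ S := by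
  intro x hx
  rw [← inl_left_mul_inr_right x]
  exact S.mul_mem (hinl _) (hinr _ hx)

end SemidirectProduct

open SemidirectProduct

theorem chiAction_apply (p i : ℕ) (H₀ : Type*) [Group H₀] (χ : H₀ →* (ZMod p)ˣ)
    (a : H₀) (w : Fin i → ZMod p) :
    chiAction p i H₀ χ a (Multiplicative.ofAdd w) =
      Multiplicative.ofAdd ((χ a : ZMod p) • w) := rfl

theorem inl_mem_of_inr_mem_of_apply_ne_one {p i : ℕ} [Fact p.Prime] {H₀ : Type*} [Group H₀]
    {χ : H₀ →* (ZMod p)ˣ}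
    {S : Subgroup (Multiplicative (Fin i → ZMod p) ⋊[chiAction p i H₀ χ] H₀)} [hS : S.Normal]
    {a : H₀} (ha : inr a ∈ S) (hχ : χ a ≠ 1) (v : Multiplicative (Fin i → ZMod p)) :
    inl v ∈ S := by
  have hunit : (1 - χ a : ZMod p) ≠ 0 := sub_ne_zero.mpr fun h => hχ (Units.ext h.symm)
  set w := (1 - χ a : ZMod p)⁻¹ • v.toAdd
  have hcomm : ⁅(inl (Multiplicative.ofAdd w) : _ ⋊[chiAction p i H₀ χ] H₀),
      (inr a : _ ⋊[chiAction p i H₀ χ] H₀)⁆ = inl v := by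
    rw [commutatorElement_inl_inr, ← ofAdd_neg, chiAction_apply, ← ofAdd_add]
    congr 1
    calc w + (χ a : ZMod p) • -w = (1 - χ a : ZMod p) • w := by module
      _ = v.toAdd := by rw [smul_inv_smul₀ hunit]
  rw [← hcomm]
  exact S.mul_mem (hS.conj_mem _ ha _) (S.inv_mem ha)

theorem normalClosure_section_ker_eq_comap_general
    (p : ℕ) (hp : p.Prime) (H₀ : Type*) [Group H₀]
    (χ ψ : H₀ →* (ZMod p)ˣ)
    (hord : Nat.card ψ.range < Nat.card χ.range)
    (i : ℕ) :
    Subgroup.normalClosure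
        ((SemidirectProduct.inr (φ := chiAction p i H₀ χ)) '' (ψ.ker : Set H₀)) =
      Subgroup.comap
        (SemidirectProduct.rightHom :
          (Multiplicative (Fin i → ZMod p)) ⋊[chiAction p i H₀ χ] H₀ →* H₀) ψ.ker := by
  have := Fact.mk hp
  obtain ⟨a, haψ, haχ⟩ := ψ.exists_mem_ker_apply_ne_one_of_card_range_lt χ hord
  refine le_antisymm (normalClosure_image_inr_le_comap_rightHom _) ?_
  have hinr : ∀ g ∈ ψ.ker, inr g ∈ Subgroup.normalClosure
      ((inr (φ := chiAction p i H₀ χ)) '' (ψ.ker : Set H₀)) :=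
    fun g hg => Subgroup.subset_normalClosure ⟨g, hg, rfl⟩
  exact comap_rightHom_le_of_inl_mem_of_inr_mem _ _
    (inl_mem_of_inr_mem_of_apply_ne_one (hinr a haψ) haχ) hinr

/-- Lemma `lm:normteileristgross`. Let `p` be a prime, `H₀` a finite
cyclic group, `χ ψ : H₀ → F_p^×` characters with `ord(ψ) < ord(χ)` (order = cardinality of
the image).  Let `H_i := H₀ ⋉ F_p^i` (the semidirect product for the diagonal `χ`-action,
with multiplication `(a,v)(b,w) = (ab, v + χ(a)w)`) and `λ_i : H₀ → H_i` the canonical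
section.  Then the normal subgroup of `H_i` generated by `λ_i(ker ψ)` is all of
`π_i⁻¹(ker ψ) = ker ψ ⋉ F_p^i`, where `π_i : H_i → H₀` is the projection. -/
theorem normalClosure_section_ker_eq_comap
    (p : ℕ) (hp : p.Prime) (H₀ : Type*) [Group H₀] [Finite H₀] (hcyc : IsCyclic H₀)
    (χ ψ : H₀ →* (ZMod p)ˣ)
    (hord : Nat.card ψ.range < Nat.card χ.range)
    (i : ℕ) (hi : 1 ≤ i) :
    Subgroup.normalClosure
        ((SemidirectProduct.inr (φ := chiAction p i H₀ χ)) '' (ψ.ker : Set H₀)) =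
      Subgroup.comap
        (SemidirectProduct.rightHom :
          (Multiplicative (Fin i → ZMod p)) ⋊[chiAction p i H₀ χ] H₀ →* H₀) ψ.ker :=
  normalClosure_section_ker_eq_comap_general p hp H₀ χ ψ hord i

end
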